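/- For 0 ≤ a ≤ n and any integer k, there exists a function h: Word(n-a,a) → ℤ such that q^{ka} [n choose a]_q = Σ_{w ∈ Word(n-a,a)} q^{n·h(w) + inv(w)}. Concretely, for k > 0 one may take h(w) to be the number of indices j with w_j = 2 among the last k positions (indices taken cyclically if k > n). -/

import Mathlib

/-!
Moving the first letter of a word `w ∈ Word(n-a,a)` to its end changes `inv w` by `a - n` if
that letter is a `2` and by `a` otherwise. If `h_m w` counts the `2`s among the last `m`
(cyclic) positions, then `h_{m+1}` of the rotated word is `h_m w` plus one exactly when the
moved letter is a `2`, so the rotation raises `n · h_m + inv` by exactly `a`. As it permutes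
`Word(n-a,a)`, induction on `m` starting from `Σ_w q^{inv w} = [n choose a]_q` (the `q`-Pascal
recursion on the first letter) gives `q^{ma} [n choose a]_q = Σ_w q^{n h_m(w) + inv w}`.
An arbitrary `k` is written as `m - n t` with `m, t ≥ 0`, and `h = h_m - a t`.
-/

open Finset

/-- The canonical word of weight `ν`: `ν.get 0` letters `1`, then `ν.get 1` letters `2`, etc. -/
def canonicalWord (ν : List ℕ) : List ℕ :=
  (List.range ν.length).flatMap fun i => List.replicate (ν.getD i 0) (i + 1)

/-- The (finite) set of all words of weight `ν`, i.e. all rearrangements of the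
canonical word of weight `ν`. -/
def WordSet (ν : List ℕ) : Finset (List ℕ) :=
  (canonicalWord ν).permutations.toFinset

/-- The number of inversions of a word: pairs of positions `i < j` with `w i > w j`. -/
def invL : List ℕ → ℕ
  | [] => 0
  | a :: l => (l.countP fun b => decide (b < a)) + invL l

/-- The major index of a word: the sum of the (1-based) positions `i` with `w_i > w_{i+1}`. -/
def majL (w : List ℕ) : ℕ :=
  ∑ i ∈ Finset.range w.length,
    if w.getD (i + 1) 0 < w.getD i 0 ∧ i + 1 < w.length then i + 1 else 0

/-- The `q`-integer `[k]_q = 1 + q + ⋯ + q^{k-1}` as a rational function in `q = X`. -/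
noncomputable def qInt (k : ℕ) : RatFunc ℚ := ∑ i ∈ Finset.range k, RatFunc.X ^ i

/-- The `q`-factorial `[k]_q!`. -/
noncomputable def qFact (k : ℕ) : RatFunc ℚ := ∏ i ∈ Finset.range k, qInt (i + 1)

/-- The `q`-multinomial coefficient `[n choose ν]_q = [n]_q! / ([ν₁]_q! [ν₂]_q! ⋯)`
where `n = ν₁ + ν₂ + ⋯`. -/
noncomputable def qMultinomial (ν : List ℕ) : RatFunc ℚ :=
  qFact ν.sum / (ν.map qFact).prod

/-- The number of letters `2` among the last `k` positions of `w` (a word of length `n`),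
positions being taken cyclically when `k > n`. -/
def lastTwoCount (n k : ℕ) (w : List ℕ) : ℕ :=
  ∑ j ∈ Finset.range k, if w.getD (n - 1 - j % n) 0 = 2 then 1 else 0

section Words

variable {b a : ℕ} {w : List ℕ}

lemma canonicalWord_pair (b a : ℕ) :
    canonicalWord [b, a] = List.replicate b 1 ++ List.replicate a 2 := by
  simp [canonicalWord, List.range_succ]

lemma mem_wordSet_pair :
    w ∈ WordSet [b, a] ↔ w.Perm (List.replicate b 1 ++ List.replicate a 2) := by
  rw [WordSet, List.mem_toFinset, List.mem_permutations, canonicalWord_pair]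

lemma length_of_mem_wordSet_pair (hw : w ∈ WordSet [b, a]) : w.length = b + a := by
  simpa using (mem_wordSet_pair.mp hw).length_eq

lemma countP_lt_one_of_mem_wordSet_pair (hw : w ∈ WordSet [b, a]) :
    w.countP (· < 1) = 0 := by
  simp [(mem_wordSet_pair.mp hw).countP_eq, List.countP_replicate]

lemma countP_one_lt_of_mem_wordSet_pair (hw : w ∈ WordSet [b, a]) :
    w.countP (1 < ·) = a := by
  simp [(mem_wordSet_pair.mp hw).countP_eq, List.countP_replicate]

lemma countP_lt_two_of_mem_wordSet_pair (hw : w ∈ WordSet [b, a]) :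
    w.countP (· < 2) = b := by
  simp [(mem_wordSet_pair.mp hw).countP_eq, List.countP_replicate]

lemma countP_two_lt_of_mem_wordSet_pair (hw : w ∈ WordSet [b, a]) :
    w.countP (2 < ·) = 0 := by
  simp [(mem_wordSet_pair.mp hw).countP_eq, List.countP_replicate]

lemma wordSet_pair_zero_right (b : ℕ) : WordSet [b, 0] = {List.replicate b 1} := by
  ext w
  simp [mem_wordSet_pair, List.perm_replicate]

lemma wordSet_pair_zero_left (a : ℕ) : WordSet [0, a] = {List.replicate a 2} := by
  ext w
  simp [mem_wordSet_pair, List.perm_replicate]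

lemma cons_mem_wordSet_pair_succ_succ {x : ℕ} {u : List ℕ} :
    x :: u ∈ WordSet [b + 1, a + 1] ↔
      x = 1 ∧ u ∈ WordSet [b, a + 1] ∨ x = 2 ∧ u ∈ WordSet [b + 1, a] := by
  have h2 : (List.replicate (b + 1) 1 ++ List.replicate (a + 1) 2).Perm
      (2 :: (List.replicate (b + 1) 1 ++ List.replicate a 2)) := List.perm_middle
  constructor
  · intro hw
    have hx := (mem_wordSet_pair.mp hw).subset List.mem_cons_self
    simp only [List.mem_append, List.mem_replicate] at hx
    rcases hx with ⟨-, rfl⟩ | ⟨-, rfl⟩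
    · exact .inl ⟨rfl, mem_wordSet_pair.mpr ((List.perm_cons 1).mp (mem_wordSet_pair.mp hw))⟩
    · exact .inr ⟨rfl,
        mem_wordSet_pair.mpr ((List.perm_cons 2).mp ((mem_wordSet_pair.mp hw).trans h2))⟩
  · rintro (⟨rfl, hu⟩ | ⟨rfl, hu⟩) <;> rw [mem_wordSet_pair]
    · exact (mem_wordSet_pair.mp hu).cons 1
    · exact ((mem_wordSet_pair.mp hu).cons 2).trans h2.symm

lemma sum_wordSet_pair_succ_succ {M : Type*} [AddCommMonoid M] (f : List ℕ → M) :
    ∑ w ∈ WordSet [b + 1, a + 1], f w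
      = ∑ u ∈ WordSet [b, a + 1], f (1 :: u) + ∑ u ∈ WordSet [b + 1, a], f (2 :: u) := by
  have hsplit : WordSet [b + 1, a + 1]
      = (WordSet [b, a + 1]).map ⟨List.cons 1, List.cons_injective⟩ ∪
        (WordSet [b + 1, a]).map ⟨List.cons 2, List.cons_injective⟩ := by
    ext w
    rcases w with _ | ⟨x, u⟩
    · simp [mem_wordSet_pair]
    · simp [cons_mem_wordSet_pair_succ_succ, and_comm, eq_comm]
  rw [hsplit, sum_union, sum_map, sum_map]
  · rfl
  · simp [disjoint_left]

lemma sum_wordSet_rotate_one {M : Type*} [AddCommMonoid M] (ν : List ℕ) (f : List ℕ → M) :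
    ∑ w ∈ WordSet ν, f (w.rotate 1) = ∑ w ∈ WordSet ν, f w := by
  refine sum_nbij (·.rotate 1) (fun w hw => ?_) (List.rotate_injective 1).injOn
    (fun w hw => ⟨w.rotate (w.length - 1), ?_, ?_⟩) fun _ _ => rfl
  all_goals simp only [Finset.mem_coe, WordSet, List.mem_toFinset, List.mem_permutations] at hw ⊢
  · exact (w.rotate_perm 1).trans hw
  · exact (w.rotate_perm _).trans hw
  · rcases w.eq_nil_or_concat with rfl | ⟨u, x, rfl⟩
    · rfl
    · simp

end Words

section QAnalogues

lemma qInt_add (p r : ℕ) : qInt (p + r) = qInt p + RatFunc.X ^ p * qInt r := by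
  simp only [qInt, sum_range_add, pow_add, mul_sum]

lemma qInt_succ_ne_zero (m : ℕ) : qInt (m + 1) ≠ 0 := by
  have hpoly : qInt (m + 1) = algebraMap (Polynomial ℚ) (RatFunc ℚ)
      (∑ i ∈ range (m + 1), Polynomial.X ^ i) := by
    simp [qInt, map_sum]
  rw [hpoly, Ne, FaithfulSMul.algebraMap_eq_zero_iff]
  intro h
  simpa [Polynomial.finsetSum_coeff, Polynomial.coeff_X_pow] using
    congrArg (Polynomial.coeff · 0) h

lemma qFact_ne_zero (m : ℕ) : qFact m ≠ 0 :=
  prod_ne_zero_iff.mpr fun i _ => qInt_succ_ne_zero i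

lemma qFact_zero : qFact 0 = 1 :=
  prod_range_zero _

lemma qFact_succ (m : ℕ) : qFact (m + 1) = qFact m * qInt (m + 1) :=
  prod_range_succ _ m

lemma qMultinomial_pair (b a : ℕ) :
    qMultinomial [b, a] = qFact (b + a) / (qFact b * qFact a) := by
  simp [qMultinomial]

lemma qMultinomial_pair_zero_right (b : ℕ) : qMultinomial [b, 0] = 1 := by
  rw [qMultinomial_pair, add_zero, qFact_zero, mul_one, div_self (qFact_ne_zero b)]

lemma qMultinomial_pair_zero_left (a : ℕ) : qMultinomial [0, a] = 1 := by
  rw [qMultinomial_pair, zero_add, qFact_zero, one_mul, div_self (qFact_ne_zero a)]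

lemma qMultinomial_pair_succ_succ (b a : ℕ) :
    qMultinomial [b + 1, a + 1]
      = qMultinomial [b, a + 1] + RatFunc.X ^ (b + 1) * qMultinomial [b + 1, a] := by
  have hfact : qFact (b + 1 + (a + 1))
      = qFact (b + a + 1) * (qInt (b + 1) + RatFunc.X ^ (b + 1) * qInt (a + 1)) := by
    rw [← qInt_add, show b + 1 + (a + 1) = b + a + 1 + 1 by ring, qFact_succ]
  simp only [qMultinomial_pair, hfact, show b + (a + 1) = b + a + 1 by ring,
    show b + 1 + a = b + a + 1 by ring, qFact_succ b, qFact_succ a]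
  field_simp [qFact_ne_zero, qInt_succ_ne_zero]

end QAnalogues

section Inversions

lemma invL_replicate (m x : ℕ) : invL (List.replicate m x) = 0 := by
  induction m with
  | zero => rfl
  | succ m ih => simp [List.replicate_succ, invL, ih, List.countP_replicate]

theorem sum_X_pow_invL_wordSet_pair :
    ∀ b a : ℕ, ∑ w ∈ WordSet [b, a], (RatFunc.X : RatFunc ℚ) ^ invL w = qMultinomial [b, a]
  | 0, a => by simp [wordSet_pair_zero_left, qMultinomial_pair_zero_left, invL_replicate]
  | b + 1, 0 => by simp [wordSet_pair_zero_right, qMultinomial_pair_zero_right, invL_replicate]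
  | b + 1, a + 1 => by
    have hone : ∀ u ∈ WordSet [b, a + 1],
        (RatFunc.X : RatFunc ℚ) ^ invL (1 :: u) = RatFunc.X ^ invL u := fun u hu => by
      rw [invL, countP_lt_one_of_mem_wordSet_pair hu, zero_add]
    have htwo : ∀ u ∈ WordSet [b + 1, a],
        (RatFunc.X : RatFunc ℚ) ^ invL (2 :: u) = RatFunc.X ^ (b + 1) * RatFunc.X ^ invL u :=
      fun u hu => by rw [invL, countP_lt_two_of_mem_wordSet_pair hu, pow_add]
    rw [sum_wordSet_pair_succ_succ, sum_congr rfl hone, sum_congr rfl htwo, ← mul_sum,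
      sum_X_pow_invL_wordSet_pair b (a + 1), sum_X_pow_invL_wordSet_pair (b + 1) a,
      qMultinomial_pair_succ_succ]

lemma invL_append_singleton (l : List ℕ) (x : ℕ) :
    invL (l ++ [x]) = invL l + l.countP (x < ·) := by
  induction l with
  | nil => rfl
  | cons y l ih =>
    simp only [List.cons_append, invL, ih, List.countP_append, List.countP_cons,
      List.countP_nil]
    by_cases hxy : x < y <;> by_cases hyx : y < x <;> simp [hxy] <;> omega

lemma invL_rotate_one_add_countP (x : ℕ) (t : List ℕ) :
    invL ((x :: t).rotate 1) + (x :: t).countP (· < x)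
      = invL (x :: t) + (x :: t).countP (x < ·) := by
  simp only [List.rotate_cons_succ, List.rotate_zero, invL_append_singleton, invL,
    List.countP_cons, lt_irrefl, decide_false]
  ring

lemma invL_rotate_one_of_mem_wordSet_pair {b a : ℕ} {w : List ℕ} (hw : w ∈ WordSet [b, a]) :
    invL (w.rotate 1) + (b + a) * (if w.getD 0 0 = 2 then 1 else 0) = invL w + a := by
  rcases w with _ | ⟨x, t⟩
  · have := length_of_mem_wordSet_pair hw
    simp only [List.length_nil] at this
    simp [invL]
    omega
  have hx := (mem_wordSet_pair.mp hw).subset List.mem_cons_self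
  simp only [List.mem_append, List.mem_replicate] at hx
  have hrot := invL_rotate_one_add_countP x t
  rcases hx with ⟨-, rfl⟩ | ⟨-, rfl⟩
  · rw [countP_lt_one_of_mem_wordSet_pair hw, countP_one_lt_of_mem_wordSet_pair hw] at hrot
    simpa using hrot
  · rw [countP_lt_two_of_mem_wordSet_pair hw, countP_two_lt_of_mem_wordSet_pair hw] at hrot
    simp only [List.getD_cons_zero, if_true]
    omega

end Inversions

section LastTwoCount

lemma sub_succ_mod_add_one_mod {n : ℕ} (hn : 0 < n) (j : ℕ) :
    (n - 1 - (j + 1) % n + 1) % n = n - 1 - j % n := by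
  have hj := Nat.mod_lt j hn
  rcases (show n = 1 ∨ 1 < n by omega) with rfl | hn1
  · simp [Nat.mod_one]
  rw [Nat.add_mod_eq_ite (m := j), Nat.mod_eq_of_lt hn1]
  split_ifs with h
  · rw [show n - 1 - (j % n + 1 - n) + 1 = n by omega, Nat.mod_self]
    omega
  · rw [Nat.mod_eq_of_lt (by omega)]
    omega

lemma getD_rotate_one {w : List ℕ} {i : ℕ} (hi : i < w.length) :
    (w.rotate 1).getD i 0 = w.getD ((i + 1) % w.length) 0 := by
  rw [List.getD_eq_getElem _ _ (by rwa [List.length_rotate]),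
    List.getD_eq_getElem _ _ (Nat.mod_lt _ (by omega)), List.getElem_rotate]

lemma lastTwoCount_succ_rotate_one {n : ℕ} {w : List ℕ} (hw : w.length = n) (m : ℕ) :
    lastTwoCount n (m + 1) (w.rotate 1)
      = lastTwoCount n m w + if w.getD 0 0 = 2 then 1 else 0 := by
  rcases Nat.eq_zero_or_pos n with rfl | hn
  · simp [List.length_eq_zero_iff.mp hw, lastTwoCount]
  rw [lastTwoCount, sum_range_succ', lastTwoCount]
  congr 1
  · refine sum_congr rfl fun j _ => ?_
    rw [getD_rotate_one (by omega), hw, sub_succ_mod_add_one_mod hn]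
  · rw [getD_rotate_one (by omega), hw, Nat.zero_mod, Nat.sub_zero, Nat.sub_add_cancel hn,
      Nat.mod_self]

end LastTwoCount

theorem X_pow_mul_qMultinomial_pair_eq_sum (b a m : ℕ) :
    (RatFunc.X : RatFunc ℚ) ^ (m * a) * qMultinomial [b, a]
      = ∑ w ∈ WordSet [b, a],
          RatFunc.X ^ ((b + a) * lastTwoCount (b + a) m w + invL w) := by
  induction m with
  | zero => simp [lastTwoCount, sum_X_pow_invL_wordSet_pair]
  | succ m ih =>
    rw [← sum_wordSet_rotate_one, add_one_mul, pow_add, mul_right_comm, ih, sum_mul]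
    refine sum_congr rfl fun w hw => ?_
    rw [← pow_add, lastTwoCount_succ_rotate_one (length_of_mem_wordSet_pair hw)]
    have := invL_rotate_one_of_mem_wordSet_pair hw
    congr 1
    linarith

/-- For `0 ≤ a ≤ n` and `k ∈ ℤ` there is a statistic `h` on words with `n - a` ones and
`a` twos such that `q^{ka} [n choose a]_q = Σ_w q^{n·h(w) + inv(w)}`; moreover for `k > 0`
one may take `h(w)` to be the number of `2`s among the last `k` letters of `w` (cyclically). -/
theorem stmt3 (n a : ℕ) (ha : a ≤ n) (k : ℤ) :
    ∃ h : List ℕ → ℤ,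
      (RatFunc.X : RatFunc ℚ) ^ (k * a) * qMultinomial [n - a, a]
        = (∑ w ∈ WordSet [n - a, a],
            (RatFunc.X : RatFunc ℚ) ^ ((n : ℤ) * h w + invL w)) ∧
      (0 < k → ∀ w ∈ WordSet [n - a, a], h w = lastTwoCount n k.toNat w) := by
  set t := (-k).toNat
  set m := (k + n * t).toNat
  have hexp : k * a = (m * a : ℕ) - n * t * a := by
    rcases Nat.eq_zero_or_pos n with rfl | hn
    · simp [Nat.le_zero.mp ha]
    · have hm : (m : ℤ) = k + n * t :=
        Int.toNat_of_nonneg (by nlinarith [Int.self_le_toNat (-k)])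
      push_cast
      rw [hm]
      ring
  have hX : (RatFunc.X : RatFunc ℚ) ≠ 0 := RatFunc.X_ne_zero
  have hsum := X_pow_mul_qMultinomial_pair_eq_sum (n - a) a m
  rw [Nat.sub_add_cancel ha] at hsum
  refine ⟨fun w => lastTwoCount n m w - a * t, ?_, fun hk w _ => ?_⟩
  · rw [hexp, sub_eq_add_neg, zpow_add₀ hX, zpow_natCast, mul_right_comm, hsum, sum_mul]
    refine sum_congr rfl fun w _ => ?_
    rw [← zpow_natCast, ← zpow_add₀ hX]
    push_cast
    ring_nf
  · simp [t, m, Int.toNat_eq_zero.mpr (neg_nonpos.mpr hk.le)]
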